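/- Suppose A is a closed subalgebra of C(X) (X compact Hausdorff) separating points and containing constants, h ∈ A, and b is a real number not in the image of Re ∘ h. Then the characteristic function of the clopen set {x ∈ X : Re(h(x)) < b} belongs to A. -/

import Mathlib

/-!
The spectrum of `h` in the Banach algebra `A` may be larger than its range `h(X)` (its spectrum in
`C(X)`), but only by bounded components of `ℂ \ h(X)`. The line `re z = b` is connected, unbounded
and misses `h(X)`, so it misses the spectrum in `A` too. The discs `ball (b - t) t` increase with
`t` and exhaust the half-plane `re z < b`, so by compactness one of them, slightly shrunk, contains
the part of the spectrum left of the line and none of the rest. The Riesz projection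
`(2πi)⁻¹ ∮ (w - h)⁻¹ dw` over its boundary lies in `A`, and evaluating at `x` turns it into the
winding number of the circle around `h x`.
-/

open Complex Metric Set Real

namespace Complex

lemma isPreconnected_setOf_re_eq (b : ℝ) : IsPreconnected {z : ℂ | z.re = b} :=
  (convex_hyperplane reLm.isLinear b).isPreconnected

lemma not_isBounded_setOf_re_eq (b : ℝ) : ¬ Bornology.IsBounded {z : ℂ | z.re = b} := by
  intro hB
  obtain ⟨R, hR⟩ := hB.subset_closedBall 0
  have hz : (⟨b, |R| + 1⟩ : ℂ) ∈ closedBall 0 R := hR rfl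
  rw [mem_closedBall, dist_zero_right] at hz
  have := abs_im_le_norm (⟨b, |R| + 1⟩ : ℂ)
  rw [abs_of_pos (by positivity)] at this
  linarith [le_abs_self R]

lemma ball_sub_self_subset_re_lt (b t : ℝ) : ball ((b - t : ℝ) : ℂ) t ⊆ {z | z.re < b} := by
  intro z hz
  rw [mem_ball, dist_eq] at hz
  have := (re_le_norm (z - (b - t : ℝ))).trans_lt hz
  simp only [sub_re, ofReal_re] at this
  show z.re < b
  linarith

lemma monotone_ball_sub_self (b : ℝ) :
    Monotone fun t : ℝ => ball ((b - t : ℝ) : ℂ) t := fun s t hst =>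
  ball_subset_ball' <| by
    rw [dist_eq, ← ofReal_sub, norm_real, Real.norm_eq_abs, abs_of_nonneg (by linarith)]
    linarith

lemma exists_mem_ball_sub_self {z : ℂ} {b : ℝ} (hz : z.re < b) :
    ∃ t : ℝ, z ∈ ball ((b - t : ℝ) : ℂ) t := by
  set u := b - z.re
  have hu : 0 < u := sub_pos.2 hz
  -- `‖z - (b - t)‖² = t² - 2tu + u² + (im z)²`, which is `< t²` as soon as `2tu > u² + (im z)²`
  refine ⟨(u ^ 2 + z.im ^ 2) / u, ?_⟩
  set t := (u ^ 2 + z.im ^ 2) / u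
  have ht : t * u = u ^ 2 + z.im ^ 2 := div_mul_cancel₀ _ hu.ne'
  have ht0 : 0 < t := by positivity
  rw [mem_ball, dist_eq, ← sq_lt_sq₀ (norm_nonneg _) ht0.le, Complex.sq_norm, normSq_apply]
  simp only [sub_re, sub_im, ofReal_re, ofReal_im, sub_zero]
  nlinarith

end Complex

lemma IsCompact.exists_ball_inter_eq_re_lt {K : Set ℂ} (hK : IsCompact K) {b : ℝ}
    (hKb : ∀ z ∈ K, z.re ≠ b) :
    ∃ c r, 0 ≤ r ∧ Disjoint (sphere c r) K ∧ ∀ z ∈ K, z ∈ ball c r ↔ z.re < b := by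
  set K' := K ∩ {z | z.re ≤ b}
  have hK' : IsCompact K' := hK.inter_right (isClosed_le continuous_re continuous_const)
  have hK'lt : ∀ z ∈ K', z.re < b := fun z hz => lt_of_le_of_ne hz.2 (hKb z hz.1)
  obtain ⟨t, ht⟩ := hK'.elim_directed_cover _ (fun _ => isOpen_ball)
    (fun z hz => mem_iUnion.2 (exists_mem_ball_sub_self (hK'lt z hz)))
    (monotone_ball_sub_self b).directed_le
  have ht1 : K' ⊆ ball ((b - max t 1 : ℝ) : ℂ) (max t 1) :=
    ht.trans (monotone_ball_sub_self b (le_max_left t 1))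
  obtain ⟨r, ⟨hr0, hrt⟩, hr⟩ := exists_pos_lt_subset_ball (by positivity) hK'.isClosed ht1
  have hhalf : closedBall ((b - max t 1 : ℝ) : ℂ) r ⊆ {z | z.re < b} :=
    (closedBall_subset_ball hrt).trans (ball_sub_self_subset_re_lt b _)
  refine ⟨((b - max t 1 : ℝ) : ℂ), r, hr0.le, disjoint_left.2 fun z hzs hzK => ?_,
    fun z hzK => ⟨fun hz => ?_, fun hz => ?_⟩⟩
  · have hzb : z.re < b := hhalf (sphere_subset_closedBall hzs)
    have hz : z ∈ ball _ r := hr ⟨hzK, hzb.le⟩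
    exact (mem_sphere.1 hzs).not_lt hz
  · exact hhalf (ball_subset_closedBall hz)
  · exact hr ⟨hzK, hz.le⟩

section BoundarySpectrum
variable {𝕜 A SA : Type*} [NormedField 𝕜] [NormedRing A] [NormedAlgebra 𝕜 A] [CompleteSpace A]
  [SetLike SA A] [SubringClass SA A] [SMulMemClass SA 𝕜 A]

lemma Subalgebra.disjoint_spectrum_of_isPreconnected (S : SA) [IsClosed (S : Set A)]
    (x : S) {L : Set 𝕜} (hL : IsPreconnected L) (hLu : ¬ Bornology.IsBounded L)
    (hLσ : Disjoint L (spectrum 𝕜 (x : A))) : Disjoint L (spectrum 𝕜 x) :=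
  disjoint_left.2 fun _ hzL hzσ =>
    hLu <| (Subalgebra.spectrum_isBounded_connectedComponentIn S x hzσ).subset
      (hL.subset_connectedComponentIn hzL hLσ.subset_compl_right)

end BoundarySpectrum

open Classical in
lemma two_pi_I_inv_smul_circleIntegral_sub_inv {c ζ : ℂ} {r : ℝ} (hr : 0 ≤ r)
    (hζ : ζ ∉ sphere c r) :
    (2 * π * I)⁻¹ • ∮ w in C(c, r), (w - ζ)⁻¹ = if ζ ∈ ball c r then 1 else 0 := by
  split_ifs with hball
  · rw [circleIntegral.integral_sub_inv_of_mem_ball hball, smul_eq_mul,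
      inv_mul_cancel₀ two_pi_I_ne_zero]
  · have hout : ζ ∉ closedBall c r := by
      rw [← ball_union_sphere]; exact not_or.2 ⟨hball, hζ⟩
    have hdiff : DifferentiableOn ℂ (fun w => (w - ζ)⁻¹) (closedBall c r) := fun w hw =>
      ((differentiableAt_id.sub_const ζ).inv
        (sub_ne_zero.2 (ne_of_mem_of_not_mem hw hout))).differentiableWithinAt
    rw [(hdiff.diffContOnCl_ball subset_rfl).circleIntegral_eq_zero hr, smul_zero]

section Riesz
variable {B : Type*} [NormedRing B] [NormedAlgebra ℂ B]

lemma AlgHom.apply_resolvent (φ : B →ₐ[ℂ] ℂ) {a : B} {w : ℂ} (hw : w ∈ resolventSet ℂ a) :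
    φ (resolvent a w) = (w - φ a)⁻¹ := by
  refine eq_inv_of_mul_eq_one_left ?_
  have hmul := congrArg φ (Ring.inverse_mul_cancel _ hw)
  rwa [map_mul, map_one, map_sub, AlgHom.commutes, Algebra.algebraMap_self,
    RingHom.id_apply] at hmul

variable [CompleteSpace B]

lemma spectrum.continuousOn_resolvent (a : B) : ContinuousOn (resolvent a) (resolventSet ℂ a) :=
  fun w hw => by
    have := NormedRing.inverse_continuousAt hw.unit
    rw [hw.unit_spec] at this
    exact (this.comp (f := fun w : ℂ => algebraMap ℂ B w - a) (by fun_prop)).continuousWithinAt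

noncomputable def rieszProjection (a : B) (c : ℂ) (r : ℝ) : B :=
  (2 * π * I)⁻¹ • ∮ w in C(c, r), resolvent a w

open Classical in
lemma AlgHom.apply_rieszProjection (φ : B →ₐ[ℂ] ℂ) {a : B} {c : ℂ} {r : ℝ} (hr : 0 ≤ r)
    (hsphere : Disjoint (sphere c r) (spectrum ℂ a)) :
    φ (rieszProjection a c r) = if φ a ∈ ball c r then 1 else 0 := by
  replace hsphere : sphere c r ⊆ resolventSet ℂ a := fun w hw =>
    spectrum.notMem_iff.1 (disjoint_left.1 hsphere hw)
  have hint : CircleIntegrable (resolvent a) c r :=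
    ((spectrum.continuousOn_resolvent a).mono hsphere).circleIntegrable hr
  have hφa : φ a ∉ sphere c r := fun h => AlgHom.apply_mem_spectrum φ a (hsphere h)
  rw [← two_pi_I_inv_smul_circleIntegral_sub_inv hr hφa, rieszProjection, map_smul]
  congr 1
  calc φ (∮ w in C(c, r), resolvent a w)
      = ∫ θ in (0 : ℝ)..2 * π, φ.toContinuousLinearMap
          (deriv (circleMap c r) θ • resolvent a (circleMap c r θ)) :=
        (φ.toContinuousLinearMap.intervalIntegral_comp_comm hint.out).symm
    _ = ∮ w in C(c, r), (w - φ a)⁻¹ := by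
        refine intervalIntegral.integral_congr fun θ _ => ?_
        simp only [map_smul, AlgHom.coe_toContinuousLinearMap]
        rw [φ.apply_resolvent (hsphere (circleMap_mem_sphere c hr θ))]

end Riesz

theorem stmt3 {X : Type*} [TopologicalSpace X] [CompactSpace X]
    (A : Subalgebra ℂ C(X, ℂ))
    (hAcl : IsClosed (A : Set C(X, ℂ)))
    (h : C(X, ℂ)) (hh : h ∈ A) (b : ℝ) (hb : ∀ x : X, (h x).re ≠ b) :
    ∃ g ∈ A, ∀ x : X, g x = if (h x).re < b then 1 else 0 := by
  have : CompleteSpace A := hAcl.completeSpace_coe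
  set h₀ : A := ⟨h, hh⟩
  have hline : Disjoint {z : ℂ | z.re = b} (spectrum ℂ h₀) := by
    refine Subalgebra.disjoint_spectrum_of_isPreconnected A h₀ (isPreconnected_setOf_re_eq b)
      (not_isBounded_setOf_re_eq b) ?_
    rw [ContinuousMap.spectrum_eq_range]
    exact disjoint_left.2 fun z hz ⟨x, hx⟩ => hb x (hx ▸ hz)
  obtain ⟨c, r, hr, hsphere, hball⟩ := (spectrum.isCompact h₀).exists_ball_inter_eq_re_lt
    fun z hz hzb => disjoint_left.1 hline hzb hz
  refine ⟨(rieszProjection h₀ c r : A), SetLike.coe_mem _, fun x => ?_⟩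
  let φ : A →ₐ[ℂ] ℂ := (ContinuousMap.evalAlgHom ℂ ℂ x).comp A.val
  have hφ := φ.apply_rieszProjection hr hsphere
  have hx : h x ∈ spectrum ℂ h₀ := AlgHom.apply_mem_spectrum φ h₀
  classical
  exact hφ.trans (if_congr (hball _ hx) rfl rfl)
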